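/- arXiv:2402.04336 — 10 statements merged into one kernel-verified Lean document; each statement's English description precedes it below -/
import Mathlib

section
/- If 0 < p ≤ 1 and (N,w) is a p-additive game, then w is convex: for every player i ∈ N and all coalitions S ⊆ T ⊆ N \ {i}, w(S ∪ {i}) − w(S) ≤ w(T ∪ {i}) − w(T). -/
open Finset

variable {ι : Type*} [DecidableEq ι] [Fintype ι]

/-- The set of players in `S` with positive individual value. -/
noncomputable def Splus (w : Finset ι → ℝ) (S : Finset ι) : Finset ι :=
  S.filter fun i => 0 < w {i}

/-- A TU game `w` (with `w ∅ = 0`) is `p`-additive. -/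
def PAdditive (p : ℝ) (w : Finset ι → ℝ) : Prop :=
  w ∅ = 0 ∧ (∀ S, 0 ≤ w S) ∧
  (∀ S : Finset ι, (∀ i ∈ S, w {i} = 0) → w S = 0) ∧
  ∀ S : Finset ι, (Splus w S).Nonempty → w S ^ p = ∑ i ∈ Splus w S, w {i} ^ p

/-! A `p`-additive game is `w S = (∑ j ∈ S, w {j} ^ p) ^ p⁻¹`, so the marginal contribution of `i`
to `S` is `f (x + w {i} ^ p) - f x` with `f = (· ^ p⁻¹)` and `x = ∑ j ∈ S, w {j} ^ p`. For
`0 < p ≤ 1` the function `f` is convex on `[0, ∞)`, so these increments increase with `x`, and `x`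
increases with the coalition. -/

theorem ConvexOn.map_add_sub_map_le_map_add_sub_map {𝕜 : Type*} [Field 𝕜] [LinearOrder 𝕜]
    [IsStrictOrderedRing 𝕜] {s : Set 𝕜} {f : 𝕜 → 𝕜} (hf : ConvexOn 𝕜 s f) {a b c : 𝕜} (ha : a ∈ s) (hbc : b + c ∈ s) (hab : a ≤ b) (hc : 0 ≤ c) :
    f (a + c) - f a ≤ f (b + c) - f b := by
  rcases hc.eq_or_lt with rfl | hc
  · simp
  rcases hab.eq_or_lt with rfl | hab
  · rfl
  have mem : ∀ x ∈ Set.Icc a (b + c), x ∈ s := fun x hx => hf.1.ordConnected.out ha hbc hx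
  have hac : a + c ∈ s := mem _ ⟨by linarith, by linarith⟩
  have hb : b ∈ s := mem _ ⟨hab.le, by linarith⟩
  -- the slope over `[a, a + c]` is at most that over `[a, b + c]`, which is at most that over
  -- `[b, b + c]`
  have left : (f (a + c) - f a) / (a + c - a) ≤ (f (b + c) - f a) / (b + c - a) :=
    hf.secant_mono ha hac hbc (by linarith) (by linarith) (by linarith)
  have right : (f (b + c) - f a) / (b + c - a) ≤ (f (b + c) - f b) / (b + c - b) := by
    have := hf.secant_mono hbc ha hb (by linarith) (by linarith) hab.le
    rwa [← neg_div_neg_eq, neg_sub, neg_sub, ← neg_div_neg_eq (f b - _), neg_sub, neg_sub] at this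
  rw [add_sub_cancel_left, div_le_div_iff₀ hc (by linarith)] at left
  rw [add_sub_cancel_left, div_le_div_iff₀ (by linarith) hc] at right
  nlinarith

namespace PAdditive

variable {p : ℝ} {w : Finset ι → ℝ}

omit [DecidableEq ι] [Fintype ι] in
theorem eq_rpow_sum (hp : p ≠ 0) (hw : PAdditive p w) (S : Finset ι) :
    w S = (∑ j ∈ S, w {j} ^ p) ^ p⁻¹ := by
  obtain ⟨-, hnonneg, hzero, hpow⟩ := hw
  -- players outside `Splus w S` have value `0`, and `0 ^ p = 0`, so they add nothing
  have hsum : ∑ j ∈ Splus w S, w {j} ^ p = ∑ j ∈ S, w {j} ^ p := by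
    refine sum_filter_of_ne fun j _ hj => ?_
    by_contra hle
    exact hj (by rw [(hnonneg {j}).antisymm' (not_lt.mp hle), Real.zero_rpow hp])
  rcases (Splus w S).eq_empty_or_nonempty with hempty | hne
  · rw [← hsum, hempty, sum_empty, Real.zero_rpow (inv_ne_zero hp)]
    refine hzero S fun j hj => (hnonneg {j}).antisymm' (not_lt.mp fun hpos => ?_)
    exact (eq_empty_iff_forall_notMem.mp hempty) j (mem_filter.mpr ⟨hj, hpos⟩)
  · rw [← hsum, ← hpow S hne, Real.rpow_rpow_inv (hnonneg S) hp]

end PAdditive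

theorem padditive_convex (p : ℝ) (hp0 : 0 < p) (hp1 : p ≤ 1)
    (w : Finset ι → ℝ) (hw : PAdditive p w) :
    ∀ (i : ι) (S T : Finset ι), S ⊆ T → i ∉ T →
      w (insert i S) - w S ≤ w (insert i T) - w T := by
  intro i S T hST hiT
  have hnonneg : ∀ j : ι, 0 ≤ w {j} ^ p := fun j => Real.rpow_nonneg (hw.2.1 {j}) p
  have hmono : ∑ j ∈ S, w {j} ^ p ≤ ∑ j ∈ T, w {j} ^ p :=
    sum_le_sum_of_subset_of_nonneg hST fun j _ _ => hnonneg j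
  have hconvex := (convexOn_rpow (one_le_inv₀ hp0 |>.mpr hp1)).map_add_sub_map_le_map_add_sub_map
    (sum_nonneg fun j _ => hnonneg j) (add_nonneg (sum_nonneg fun j _ => hnonneg j) (hnonneg i))
    hmono (hnonneg i)
  rw [hw.eq_rpow_sum hp0.ne' (insert i S), hw.eq_rpow_sum hp0.ne' S,
    hw.eq_rpow_sum hp0.ne' (insert i T), hw.eq_rpow_sum hp0.ne' T,
    sum_insert hiT, sum_insert fun h => hiT (hST h), add_comm (w {i} ^ p), add_comm (w {i} ^ p)]
  exact hconvex
end

section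
/- If p ≥ 1 and (N,w) is a p-additive game, then w is concave: for every player i ∈ N and all coalitions S ⊆ T ⊆ N \ {i}, w(S ∪ {i}) − w(S) ≥ w(T ∪ {i}) − w(T). -/
open Finset

variable {ι : Type*} [DecidableEq ι] [Fintype ι]

lemma aux_deriv {q c : ℝ} (hc : 0 ≤ c) {t : ℝ} (ht0 : 0 < t) :
    HasDerivAt (fun x : ℝ => (x + c) ^ q - x ^ q)
      (q * (t + c) ^ (q - 1) * 1 - q * t ^ (q - 1)) t := by
  have h1 : HasDerivAt (fun x : ℝ => (x + c) ^ q) (q * (t + c) ^ (q - 1) * 1) t :=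
    (Real.hasDerivAt_rpow_const (Or.inl (by positivity))).comp t
      ((hasDerivAt_id t).add_const c)
  exact h1.sub (Real.hasDerivAt_rpow_const (Or.inl ht0.ne'))

lemma aux_anti {q c : ℝ} (hq0 : 0 < q) (hq1 : q ≤ 1) (hc : 0 ≤ c) :
    AntitoneOn (fun x : ℝ => (x + c) ^ q - x ^ q) (Set.Ici 0) := by
  have hcont : ContinuousOn (fun x : ℝ => (x + c) ^ q - x ^ q) (Set.Ici 0) :=
    (((Real.continuous_rpow_const hq0.le).comp (continuous_add_right c)).sub
      (Real.continuous_rpow_const hq0.le)).continuousOn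
  apply antitoneOn_of_deriv_nonpos (convex_Ici 0) hcont
  · rw [interior_Ici]
    exact fun t ht => ((aux_deriv hc ht).differentiableAt).differentiableWithinAt
  · rw [interior_Ici]
    intro t ht
    rw [(aux_deriv hc ht).deriv]
    have h3 : (t + c) ^ (q - 1) ≤ t ^ (q - 1) :=
      Real.rpow_le_rpow_of_nonpos ht (by linarith) (by linarith)
    have ht0 : (0:ℝ) < t := ht
    nlinarith [Real.rpow_nonneg (by linarith : (0:ℝ) ≤ t + c) (q - 1)]

theorem padditive_concave (p : ℝ) (hp : 1 ≤ p)
    (w : Finset ι → ℝ) (hw : PAdditive p w) :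
    ∀ (i : ι) (S T : Finset ι), S ⊆ T → i ∉ T →
      w (insert i T) - w T ≤ w (insert i S) - w S := by
  obtain ⟨h0, hnn, hz, heq⟩ := hw
  have hp0 : (0:ℝ) < p := by linarith
  have hq0 : (0:ℝ) < p⁻¹ := by positivity
  have hq1 : p⁻¹ ≤ 1 := by
    rw [inv_le_one_iff₀]; right; exact hp
  -- the formula w S = (∑ j in Splus w S, w {j} ^ p) ^ p⁻¹
  have hform : ∀ S : Finset ι, w S = (∑ j ∈ Splus w S, w {j} ^ p) ^ p⁻¹ := by
    intro S
    rcases (Splus w S).eq_empty_or_nonempty with he | hne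
    · rw [he, Finset.sum_empty, Real.zero_rpow hq0.ne']
      apply hz
      intro i hi
      have : ¬ 0 < w {i} := fun h => by
        have : i ∈ Splus w S := Finset.mem_filter.2 ⟨hi, h⟩
        simp [he] at this
      linarith [hnn {i}]
    · rw [← heq S hne]
      exact (Real.rpow_rpow_inv (hnn S) hp0.ne').symm
  -- nonnegativity of sums
  have hsum_nonneg : ∀ S : Finset ι, (0:ℝ) ≤ ∑ j ∈ Splus w S, w {j} ^ p :=
    fun S => Finset.sum_nonneg fun j _ => Real.rpow_nonneg (hnn {j}) p
  intro i S T hST hiT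
  have hiS : i ∉ S := fun h => hiT (hST h)
  by_cases hi : 0 < w {i}
  · -- Splus (insert i S) = insert i (Splus w S)
    have hins : ∀ U : Finset ι, i ∉ U →
        Splus w (insert i U) = insert i (Splus w U) := by
      intro U _
      simp [Splus, Finset.filter_insert, hi]
    have hsum : ∀ U : Finset ι, i ∉ U →
        ∑ j ∈ Splus w (insert i U), w {j} ^ p
          = (∑ j ∈ Splus w U, w {j} ^ p) + w {i} ^ p := by
      intro U hiU
      have hni : i ∉ Splus w U := fun h => hiU ((Finset.mem_filter.1 h).1)
      rw [hins U hiU, Finset.sum_insert hni, add_comm]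
    have hc : (0:ℝ) ≤ w {i} ^ p := Real.rpow_nonneg (hnn {i}) p
    have hle : ∑ j ∈ Splus w S, w {j} ^ p ≤ ∑ j ∈ Splus w T, w {j} ^ p := by
      apply Finset.sum_le_sum_of_subset_of_nonneg
      · exact Finset.filter_subset_filter _ hST
      · exact fun j _ _ => Real.rpow_nonneg (hnn {j}) p
    have key := aux_anti hq0 hq1 hc (Set.mem_Ici.2 (hsum_nonneg S))
      (Set.mem_Ici.2 (hsum_nonneg T)) hle
    simp only at key
    rw [hform (insert i S), hform S, hform (insert i T), hform T,
      hsum S hiS, hsum T hiT]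
    exact key
  · -- w {i} = 0, marginal contributions are both 0
    have hi0 : Splus w (insert i S) = Splus w S ∧ Splus w (insert i T) = Splus w T := by
      constructor <;> simp [Splus, Finset.filter_insert, hi]
    rw [hform (insert i S), hform S, hform (insert i T), hform T, hi0.1, hi0.2]
    simp
end

section
/- Every p-additive game (N,w) with p < 0 is subadditive: for all disjoint coalitions S, T ⊆ N, w(S ∪ T) ≤ w(S) + w(T). -/
open Finset

variable {ι : Type*} [DecidableEq ι] [Fintype ι]

theorem padditive_subadditive (p : ℝ) (hp : p < 0)
    (w : Finset ι → ℝ) (hw : PAdditive p w) :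
    ∀ S T : Finset ι, Disjoint S T → w (S ∪ T) ≤ w S + w T := by
  obtain ⟨h0, hnn, hzero, hsum⟩ := hw
  have hsumpos : ∀ S : Finset ι, (Splus w S).Nonempty →
      0 < ∑ i ∈ Splus w S, w {i} ^ p := by
    intro S hS
    exact Finset.sum_pos (fun i hi => Real.rpow_pos_of_pos
      (Finset.mem_filter.mp hi).2 p) hS
  have hpos : ∀ S : Finset ι, (Splus w S).Nonempty → 0 < w S := by
    intro S hS
    rcases (hnn S).lt_or_eq with h | h
    · exact h
    · exfalso
      have := hsum S hS
      rw [← h, Real.zero_rpow hp.ne] at this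
      exact absurd (this ▸ hsumpos S hS) (lt_irrefl _)
  have hzeroS : ∀ S : Finset ι, ¬ (Splus w S).Nonempty → w S = 0 := by
    intro S hS
    apply hzero
    intro i hi
    by_contra h
    exact hS ⟨i, Finset.mem_filter.mpr ⟨hi, lt_of_le_of_ne (hnn {i}) (Ne.symm h)⟩⟩
  intro S T hST
  have hU : Splus w (S ∪ T) = Splus w S ∪ Splus w T := Finset.filter_union _ _ _
  have hdisj : Disjoint (Splus w S) (Splus w T) :=
    hST.mono (Finset.filter_subset _ _) (Finset.filter_subset _ _)
  by_cases hS : (Splus w S).Nonempty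
  · by_cases hT : (Splus w T).Nonempty
    · have hUne : (Splus w (S ∪ T)).Nonempty := by
        rw [hU]; exact hS.mono Finset.subset_union_left
      have key : w (S ∪ T) ^ p = w S ^ p + w T ^ p := by
        rw [hsum _ hUne, hU, Finset.sum_union hdisj, hsum S hS, hsum T hT]
      have h1 : w S ^ p < w (S ∪ T) ^ p := by
        rw [key]
        linarith [Real.rpow_pos_of_pos (hpos T hT) p]
      have := (Real.rpow_lt_rpow_iff_of_neg (hpos S hS) (hpos _ hUne) hp).mp h1
      linarith [hnn T]
    · have hUne : (Splus w (S ∪ T)).Nonempty := by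
        rw [hU]; exact hS.mono Finset.subset_union_left
      have hTemp : Splus w T = ∅ := Finset.not_nonempty_iff_eq_empty.mp hT
      have key : w (S ∪ T) ^ p = w S ^ p := by
        rw [hsum _ hUne, hU, hTemp, Finset.union_empty, hsum S hS]
      have h1 : w (S ∪ T) = w S := by
        have h2 := (Real.rpow_le_rpow_iff_of_neg (hpos _ hUne) (hpos S hS) hp).mp key.le
        have h3 := (Real.rpow_le_rpow_iff_of_neg (hpos S hS) (hpos _ hUne) hp).mp key.ge
        linarith
      rw [h1, hzeroS T hT]; linarith
  · have hTzS : w S = 0 := hzeroS S hS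
    by_cases hT : (Splus w T).Nonempty
    · have hUne : (Splus w (S ∪ T)).Nonempty := by
        rw [hU]; exact hT.mono Finset.subset_union_right
      have hSemp : Splus w S = ∅ := Finset.not_nonempty_iff_eq_empty.mp hS
      have key : w (S ∪ T) ^ p = w T ^ p := by
        rw [hsum _ hUne, hU, hSemp, Finset.empty_union, hsum T hT]
      have h2 := (Real.rpow_le_rpow_iff_of_neg (hpos _ hUne) (hpos T hT) hp).mp key.le
      have h3 := (Real.rpow_le_rpow_iff_of_neg (hpos T hT) (hpos _ hUne) hp).mp key.ge
      linarith
    · have hUe : ¬ (Splus w (S ∪ T)).Nonempty := by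
        rw [hU, Finset.not_nonempty_iff_eq_empty.mp hS,
          Finset.not_nonempty_iff_eq_empty.mp hT, Finset.union_empty]
        simp
      rw [hzeroS _ hUe, hTzS, hzeroS T hT]; norm_num
end

section
/- Every p-additive game with p < 0 is totally balanced: every subgame (restriction of w to subsets of a fixed coalition S) has a nonempty core. -/
open Finset

variable {ι : Type*} [DecidableEq ι] [Fintype ι]

theorem padditive_totally_balanced (p : ℝ) (hp : p < 0)
    (w : Finset ι → ℝ) (hw : PAdditive p w) :
    ∀ S : Finset ι, ∃ x : ι → ℝ,
      (∑ j ∈ S, x j) = w S ∧ ∀ T ⊆ S, (∑ j ∈ T, x j) ≤ w T := by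
  obtain ⟨h0, hnn, hzero, hpadd⟩ := hw
  intro S
  -- key: positivity of w on sets with nonempty Splus
  have hpos : ∀ T : Finset ι, (Splus w T).Nonempty → 0 < w T := by
    intro T hT
    rcases (hnn T).lt_or_eq with h | h
    · exact h
    · exfalso
      have h1 : w T ^ p = ∑ i ∈ Splus w T, w {i} ^ p := hpadd T hT
      have h2 : (0:ℝ) < ∑ i ∈ Splus w T, w {i} ^ p := by
        apply Finset.sum_pos
        · intro i hi
          exact Real.rpow_pos_of_pos (Finset.mem_filter.1 hi).2 p
        · exact hT
      rw [← h, Real.zero_rpow hp.ne] at h1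
      linarith
  by_cases hSp : (Splus w S).Nonempty
  · have hwS : 0 < w S := hpos S hSp
    refine ⟨fun j => if j ∈ Splus w S then w S ^ (1 - p) * w {j} ^ p else 0, ?_, ?_⟩
    · rw [Finset.sum_ite_mem]
      have : S ∩ Splus w S = Splus w S := by
        apply Finset.inter_eq_right.2
        exact Finset.filter_subset _ _
      rw [this, ← Finset.mul_sum, ← hpadd S hSp, ← Real.rpow_add hwS]
      simp
    · intro T hTS
      rw [Finset.sum_ite_mem]
      have hTcap : T ∩ Splus w S = Splus w T := by
        ext i
        simp only [Splus, Finset.mem_inter, Finset.mem_filter]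
        exact ⟨fun ⟨h1, _, h3⟩ => ⟨h1, h3⟩, fun ⟨h1, h3⟩ => ⟨h1, hTS h1, h3⟩⟩
      rw [hTcap]
      by_cases hTp : (Splus w T).Nonempty
      · have hwT : 0 < w T := hpos T hTp
        rw [← Finset.mul_sum, ← hpadd T hTp]
        -- w T ^ p ≤ w S ^ p since Splus w T ⊆ Splus w S
        have hsub : Splus w T ⊆ Splus w S := by
          intro i hi
          simp only [Splus, Finset.mem_filter] at hi ⊢
          exact ⟨hTS hi.1, hi.2⟩
        have hle : w T ^ p ≤ w S ^ p := by
          rw [hpadd T hTp, hpadd S hSp]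
          apply Finset.sum_le_sum_of_subset_of_nonneg hsub
          intro i _ _
          exact Real.rpow_nonneg (hnn _) p
        have hST : w S ≤ w T := (Real.rpow_le_rpow_iff_of_neg hwT hwS hp).1 hle
        have h1p : w S ^ (1 - p) ≤ w T ^ (1 - p) :=
          Real.rpow_le_rpow hwS.le hST (by linarith)
        calc w S ^ (1 - p) * w T ^ p ≤ w T ^ (1 - p) * w T ^ p := by
              apply mul_le_mul_of_nonneg_right h1p
              positivity
          _ = w T := by rw [← Real.rpow_add hwT]; simp
      · rw [Finset.not_nonempty_iff_eq_empty.1 hTp]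
        simpa using hnn T
  · refine ⟨fun _ => 0, ?_, ?_⟩
    · rw [Finset.sum_const, smul_zero]
      symm
      apply hzero
      intro i hi
      have : i ∉ Splus w S := by
        rw [Finset.not_nonempty_iff_eq_empty.1 hSp]; exact notMem_empty i
      simp only [Splus, Finset.mem_filter, not_and, not_lt] at this
      exact le_antisymm (this hi) (hnn {i})
    · intro T _
      simpa using hnn T
end

section
/- Let (N,w) be a p-additive game with p < 0, let i ∈ N and S ⊂ T ⊆ N \ {i}. Then w(S ∪ {i}) − w(S) < w(T ∪ {i}) − w(T) if and only if the following three conditions hold: (i) S₊ is nonempty; (ii) S₊ ≠ T₊; (iii) w({i}) > 0. -/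
open Finset

variable {ι : Type*} [DecidableEq ι] [Fintype ι]

/-!
Since `0 ^ p = 0` for `p ≠ 0`, players of value zero contribute nothing to `∑ j, w {j} ^ p`, so a
`p`-additive game is `w S = σ(S) ^ (1/p)` with `σ(S) = ∑ j ∈ S, w {j} ^ p`, also when `S₊ = ∅`.
The marginal contribution of `i` to `S` is then `g(σ(S))` with `g(x) = (x + c) ^ q - x ^ q`,
`c = w {i} ^ p` and `q = 1/p < 0`. For `c > 0` the function `g` is strictly increasing on
`(0, ∞)`, because `x ↦ x ^ (q - 1)` is decreasing; and `g(0) = c ^ q` dominates every value of `g`.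
As `σ` is monotone, with `σ(S) < σ(T)` exactly when `S₊ ≠ T₊`, the three conditions are precisely
`σ(S) > 0`, `σ(S) < σ(T)` and `c > 0`.
-/

namespace Real

lemma rpow_pos_iff_of_nonneg {x p : ℝ} (hx : 0 ≤ x) (hp : p ≠ 0) : 0 < x ^ p ↔ 0 < x := by
  rcases hx.eq_or_lt with rfl | hx
  · simp [zero_rpow hp]
  · simp [hx, rpow_pos_of_pos hx]

lemma strictMonoOn_rpow_add_sub_rpow {q c : ℝ} (hq : q < 0) (hc : 0 < c) :
    StrictMonoOn (fun x : ℝ => (x + c) ^ q - x ^ q) (Set.Ioi 0) := by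
  apply strictMonoOn_of_deriv_pos (convex_Ioi 0)
  · intro x (hx : 0 < x)
    exact (((continuousAt_id.add continuousAt_const).rpow_const
      (Or.inl (by linarith : 0 < x + c).ne')).sub
      (continuousAt_id.rpow_const (Or.inl hx.ne'))).continuousWithinAt
  · rw [interior_Ioi]
    intro x (hx : 0 < x)
    have hderiv : HasDerivAt (fun x : ℝ => (x + c) ^ q - x ^ q)
        (1 * q * (x + c) ^ (q - 1) - 1 * q * x ^ (q - 1)) x :=
      ((hasDerivAt_id' x).add_const c |>.rpow_const (Or.inl (by linarith : 0 < x + c).ne')).sub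
        (hasDerivAt_id' x |>.rpow_const (Or.inl hx.ne'))
    have hdecr : (x + c) ^ (q - 1) < x ^ (q - 1) :=
      rpow_lt_rpow_of_neg hx (by linarith) (by linarith)
    rw [hderiv.deriv]
    nlinarith

lemma rpow_add_sub_rpow_lt_iff {q a b c : ℝ} (hq : q < 0) (ha : 0 ≤ a) (hab : a ≤ b)
    (hc : 0 ≤ c) :
    (a + c) ^ q - a ^ q < (b + c) ^ q - b ^ q ↔ 0 < a ∧ a < b ∧ 0 < c := by
  constructor
  · intro h
    have hc : 0 < c := hc.lt_of_ne <| by rintro rfl; simp at h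
    have ha : 0 < a := ha.lt_of_ne <| by
      rintro rfl
      have hbc : (b + c) ^ q ≤ c ^ q := rpow_le_rpow_of_nonpos hc (by linarith) hq.le
      have hb : 0 ≤ b ^ q := rpow_nonneg hab q
      rw [zero_add, zero_rpow hq.ne] at h
      linarith
    exact ⟨ha, hab.lt_of_ne (by rintro rfl; exact lt_irrefl _ h), hc⟩
  · rintro ⟨ha, hab, hc⟩
    exact strictMonoOn_rpow_add_sub_rpow hq hc ha (ha.trans hab) hab

end Real

section PowerSum

variable {w : Finset ι → ℝ} {p : ℝ}

omit [DecidableEq ι] [Fintype ι]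

lemma sum_Splus_rpow (hw : ∀ j, 0 ≤ w {j}) (hp : p ≠ 0) (A : Finset ι) :
    ∑ j ∈ Splus w A, w {j} ^ p = ∑ j ∈ A, w {j} ^ p :=
  sum_filter_of_ne fun j _ hj =>
    (Real.rpow_pos_iff_of_nonneg (hw j) hp).1 ((Real.rpow_nonneg (hw j) p).lt_of_ne' hj)

lemma sum_rpow_pos_iff (hw : ∀ j, 0 ≤ w {j}) (hp : p ≠ 0) (A : Finset ι) :
    0 < ∑ j ∈ A, w {j} ^ p ↔ (Splus w A).Nonempty := by
  rw [sum_pos_iff_of_nonneg fun j _ => Real.rpow_nonneg (hw j) p, Splus, filter_nonempty_iff]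
  simp only [Real.rpow_pos_iff_of_nonneg (hw _) hp]

lemma sum_rpow_lt_sum_rpow_iff (hw : ∀ j, 0 ≤ w {j}) (hp : p ≠ 0) {S T : Finset ι}
    (hST : S ⊆ T) :
    ∑ j ∈ S, w {j} ^ p < ∑ j ∈ T, w {j} ^ p ↔ Splus w S ≠ Splus w T := by
  rw [← sum_Splus_rpow hw hp S, ← sum_Splus_rpow hw hp T]
  have hsub : Splus w S ⊆ Splus w T := filter_subset_filter _ hST
  constructor
  · rintro h heq
    rw [heq] at h
    exact lt_irrefl _ h
  · intro hne
    obtain ⟨j, hjT, hjS⟩ := exists_of_ssubset (hsub.ssubset_of_ne hne)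
    exact sum_lt_sum_of_subset hsub hjT hjS (Real.rpow_pos_of_pos (mem_filter.1 hjT).2 p)
      fun k _ _ => Real.rpow_nonneg (hw k) p

lemma PAdditive.eq_rpow_sum_s11 (hw : PAdditive p w) (hp : p ≠ 0) (A : Finset ι) :
    w A = (∑ j ∈ A, w {j} ^ p) ^ p⁻¹ := by
  obtain ⟨-, hnn, hzero, hsum⟩ := hw
  rw [← sum_Splus_rpow (fun j => hnn {j}) hp A]
  by_cases hA : (Splus w A).Nonempty
  · rw [← hsum A hA, Real.rpow_rpow_inv (hnn A) hp]
  · have hA : Splus w A = ∅ := not_nonempty_iff_eq_empty.1 hA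
    have hzeroA : ∀ j ∈ A, w {j} = 0 := fun j hj =>
      le_antisymm (not_lt.1 (filter_eq_empty_iff.1 hA hj)) (hnn {j})
    rw [hzero A hzeroA, hA, sum_empty, Real.zero_rpow (inv_ne_zero hp)]

end PowerSum

theorem padditive_strict_marginal_iff (p : ℝ) (hp : p < 0)
    (w : Finset ι → ℝ) (hw : PAdditive p w) (i : ι) (S T : Finset ι)
    (hST : S ⊂ T) (hiT : i ∉ T) :
    w (insert i S) - w S < w (insert i T) - w T ↔
      ((Splus w S).Nonempty ∧ Splus w S ≠ Splus w T ∧ 0 < w {i}) := by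
  have hnn : ∀ j, 0 ≤ w {j} := fun j => hw.2.1 {j}
  have hiS : i ∉ S := fun h => hiT (hST.subset h)
  have hσS : 0 ≤ ∑ j ∈ S, w {j} ^ p := sum_nonneg fun j _ => Real.rpow_nonneg (hnn j) p
  have hσST : ∑ j ∈ S, w {j} ^ p ≤ ∑ j ∈ T, w {j} ^ p :=
    sum_le_sum_of_subset_of_nonneg hST.subset fun j _ _ => Real.rpow_nonneg (hnn j) p
  rw [hw.eq_rpow_sum_s11 hp.ne (insert i S), hw.eq_rpow_sum_s11 hp.ne S,
    hw.eq_rpow_sum_s11 hp.ne (insert i T), hw.eq_rpow_sum_s11 hp.ne T,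
    sum_insert hiS, sum_insert hiT, add_comm (w {i} ^ p), add_comm (w {i} ^ p),
    Real.rpow_add_sub_rpow_lt_iff (inv_lt_zero.2 hp) hσS hσST (Real.rpow_nonneg (hnn i) p),
    sum_rpow_pos_iff hnn hp.ne, sum_rpow_lt_sum_rpow_iff hnn hp.ne hST.subset,
    Real.rpow_pos_iff_of_nonneg (hnn i) hp.ne]
end

section
/- Let (N,w) be a p-additive game with p < 0. If |N₊| ≤ 2 (at most two players have positive individual value), then w is concave: w(S ∪ {i}) − w(S) ≥ w(T ∪ {i}) − w(T) for all i ∈ N and S ⊆ T ⊆ N \ {i}. -/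
open Finset

variable {ι : Type*} [DecidableEq ι] [Fintype ι]

lemma key_ineq {p a b : ℝ} (hp : p < 0) (ha : 0 < a) (hb : 0 < b) :
    (a ^ p + b ^ p) ^ p⁻¹ ≤ a := by
  have hap : (0:ℝ) < a ^ p := Real.rpow_pos_of_pos ha p
  have hbp : (0:ℝ) < b ^ p := Real.rpow_pos_of_pos hb p
  have h2 : (a ^ p + b ^ p) ^ p⁻¹ ≤ (a ^ p) ^ p⁻¹ :=
    Real.rpow_le_rpow_of_nonpos hap (by linarith) (le_of_lt (inv_neg''.mpr hp))
  rwa [Real.rpow_rpow_inv ha.le (ne_of_lt hp)] at h2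

lemma w_val {p : ℝ} {w : Finset ι → ℝ} (hp : p ≠ 0) (hnn : ∀ S, 0 ≤ w S)
    (hsum : ∀ S : Finset ι, (Splus w S).Nonempty →
      w S ^ p = ∑ i ∈ Splus w S, w {i} ^ p)
    {S : Finset ι} (h : (Splus w S).Nonempty) :
    w S = (∑ i ∈ Splus w S, w {i} ^ p) ^ p⁻¹ := by
  rw [← hsum S h, Real.rpow_rpow_inv (hnn S) hp]

lemma w_zero {w : Finset ι → ℝ} (hnn : ∀ S, 0 ≤ w S)
    (hz : ∀ S : Finset ι, (∀ i ∈ S, w {i} = 0) → w S = 0)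
    {S : Finset ι} (h : Splus w S = ∅) : w S = 0 := by
  apply hz
  intro i hi
  have : i ∉ Splus w S := by simp [h]
  simp only [Splus, mem_filter, hi, true_and, not_lt] at this
  exact le_antisymm this (hnn {i})

lemma Splus_insert {w : Finset ι → ℝ} {i : ι} {S : Finset ι} (hi : 0 < w {i}) :
    Splus w (insert i S) = insert i (Splus w S) := by
  classical
  simp only [Splus, filter_insert]
  rw [if_pos hi]

lemma Splus_insert_of_nonpos {w : Finset ι → ℝ} {i : ι} {S : Finset ι}
    (hi : ¬ 0 < w {i}) : Splus w (insert i S) = Splus w S := by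
  classical
  simp only [Splus, filter_insert]
  rw [if_neg hi]

lemma w_eq_of_Splus_eq {p : ℝ} {w : Finset ι → ℝ} (hp : p ≠ 0)
    (hw : PAdditive p w) {S T : Finset ι}
    (h : Splus w S = Splus w T) : w S = w T := by
  obtain ⟨h0, hnn, hz, hsum⟩ := hw
  rcases (Splus w S).eq_empty_or_nonempty with he | hne
  · rw [w_zero hnn hz he, w_zero hnn hz (h ▸ he)]
  · rw [w_val hp hnn hsum hne, w_val hp hnn hsum (h ▸ hne), h]

theorem padditive_card_le_two_concave (p : ℝ) (hp : p < 0)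
    (w : Finset ι → ℝ) (hw : PAdditive p w)
    (hcard : (Splus w Finset.univ).card ≤ 2) :
    ∀ (i : ι) (S T : Finset ι), S ⊆ T → i ∉ T →
      w (insert i T) - w T ≤ w (insert i S) - w S := by
  have hp' : p ≠ 0 := ne_of_lt hp
  obtain ⟨h0, hnn, hz, hsum⟩ := hw
  have hw' : PAdditive p w := ⟨h0, hnn, hz, hsum⟩
  intro i S T hST hiT
  have hiS : i ∉ S := fun h => hiT (hST h)
  by_cases hi : 0 < w {i}
  · -- i is a positive player
    have hiTp : i ∉ Splus w T := fun h => hiT (mem_of_mem_filter i h)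
    have hTsub : Splus w T ⊆ (Splus w Finset.univ).erase i := by
      intro j hj
      refine mem_erase.mpr ⟨fun hji => hiTp (hji ▸ hj), ?_⟩
      simp only [Splus, mem_filter] at hj ⊢
      exact ⟨mem_univ j, hj.2⟩
    have hiu : i ∈ Splus w Finset.univ := by
      simp [Splus, hi]
    have hcardT : (Splus w T).card ≤ 1 := by
      have h1 := Finset.card_le_card hTsub
      have h2 := Finset.card_erase_of_mem hiu
      omega
    have hSTp : Splus w S ⊆ Splus w T := Finset.filter_subset_filter _ hST
    rcases (Splus w T).eq_empty_or_nonempty with heT | hneT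
    · -- Splus T empty, hence Splus S empty
      have heS : Splus w S = ∅ := Finset.subset_empty.mp (heT ▸ hSTp)
      have : Splus w (insert i S) = Splus w (insert i T) := by
        rw [Splus_insert hi, Splus_insert hi, heS, heT]
      rw [w_eq_of_Splus_eq hp' hw' this, w_zero hnn hz heS, w_zero hnn hz heT]
    · -- Splus T = {j}
      have hc1 : (Splus w T).card = 1 :=
        le_antisymm hcardT (Finset.card_pos.mpr hneT)
      obtain ⟨j, hj⟩ := Finset.card_eq_one.mp hc1
      have hjj : j ∈ Splus w T := hj ▸ Finset.mem_singleton_self j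
      have hjpos : 0 < w {j} := (mem_filter.mp hjj).2
      have hij : i ≠ j := fun h => hiTp (h ▸ hjj)
      rcases (Splus w S).eq_empty_or_nonempty with heS | hneS
      · -- Splus S = ∅ : the real case
        have hwS : w S = 0 := w_zero hnn hz heS
        have hwiS : w (insert i S) = w {i} := by
          have hSi : Splus w (insert i S) = {i} := by
            rw [Splus_insert hi, heS]; rfl
          rw [w_val hp' hnn hsum (by rw [hSi]; exact singleton_nonempty i), hSi,
            Finset.sum_singleton, Real.rpow_rpow_inv (hnn {i}) hp']
        have hwT : w T = w {j} := by
          rw [w_val hp' hnn hsum hneT, hj, Finset.sum_singleton,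
            Real.rpow_rpow_inv (hnn {j}) hp']
        have hwiT : w (insert i T) = (w {i} ^ p + w {j} ^ p) ^ p⁻¹ := by
          have hTi : Splus w (insert i T) = insert i {j} := by
            rw [Splus_insert hi, hj]
          rw [w_val hp' hnn hsum (by rw [hTi]; exact insert_nonempty i {j}), hTi,
            Finset.sum_insert (by simp [hij]), Finset.sum_singleton]
        rw [hwS, hwiS, hwT, hwiT]
        have := key_ineq hp hi hjpos
        linarith
      · -- Splus S = {j} as well
        have hSj : Splus w S = {j} := by
          apply Finset.eq_of_subset_of_card_le (hj ▸ hSTp)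
          rw [Finset.card_singleton]
          exact Finset.card_pos.mpr hneS
        have h1 : Splus w (insert i S) = Splus w (insert i T) := by
          rw [Splus_insert hi, Splus_insert hi, hSj, hj]
        have h2 : Splus w S = Splus w T := by rw [hSj, hj]
        rw [w_eq_of_Splus_eq hp' hw' h1, w_eq_of_Splus_eq hp' hw' h2]
  · -- w {i} = 0 : insertion changes nothing
    have h1 : Splus w (insert i S) = Splus w S := Splus_insert_of_nonpos hi
    have h2 : Splus w (insert i T) = Splus w T := Splus_insert_of_nonpos hi
    rw [w_eq_of_Splus_eq hp' hw' h1, w_eq_of_Splus_eq hp' hw' h2]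
    linarith [le_refl (0:ℝ)]
end

section
/- Let (N,w) be a concave p-additive game with p < 0. Then |N₊| ≤ 2, i.e., at most two players have positive individual value. -/
open Finset

variable {ι : Type*} [DecidableEq ι] [Fintype ι]

/-! With `φ t = t ^ p⁻¹`, `p`-additivity says `w S = φ (∑ i ∈ S₊, w {i} ^ p)`, and `φ` is strictly
convex on `(0, ∞)` since `p⁻¹ < 0`. A strictly convex function has strictly increasing increments,
so if three players had positive values, with `a, b, c` their `p`-th powers, the marginal
contribution `φ (c + a) - φ a` of the third player to the first would be strictly smaller than its
contribution `φ (c + b + a) - φ (b + a)` to the first two, contradicting concavity. -/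

lemma Real.strictConvexOn_rpow_of_neg {q : ℝ} (hq : q < 0) :
    StrictConvexOn ℝ (Set.Ioi 0) fun x : ℝ ↦ x ^ q := by
  refine StrictMonoOn.strictConvexOn_of_deriv (convex_Ioi 0)
    (fun x hx ↦ (Real.continuousAt_rpow_const x q (Or.inl hx.ne')).continuousWithinAt) ?_
  rw [interior_Ioi, Real.deriv_rpow_const']
  intro x hx y _ hxy
  exact mul_lt_mul_of_neg_left (Real.rpow_lt_rpow_of_neg hx hxy (by linarith)) hq

lemma StrictConvexOn.map_add_sub_lt_map_add_sub {𝕜 β : Type*} [Field 𝕜] [LinearOrder 𝕜]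
    [IsStrictOrderedRing 𝕜] [AddCommGroup β] [PartialOrder β] [IsOrderedAddMonoid β]
    [Module 𝕜 β] {s : Set 𝕜} {f : 𝕜 → β} (hf : StrictConvexOn 𝕜 s f) {x y d : 𝕜}
    (hx : x ∈ s) (hdy : d + y ∈ s) (hxy : x < y) (hd : 0 < d) :
    f (d + x) - f x < f (d + y) - f y := by
  have hL : 0 < y + d - x := by linarith
  set θ := d / (y + d - x)
  have hθ : 0 < θ := div_pos hd hL
  have hθ' : 0 < 1 - θ := by rw [sub_pos, div_lt_one hL]; linarith
  have hne : x ≠ d + y := by linarith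
  -- `d + x` and `y` are the convex combinations of `x` and `d + y` with swapped weights.
  have hdx : (1 - θ) • x + θ • (d + y) = d + x := by
    simp only [smul_eq_mul, θ]; field_simp; ring
  have hy : θ • x + (1 - θ) • (d + y) = y := by
    simp only [smul_eq_mul, θ]; field_simp; ring
  have h₁ := hf.2 hx hdy hne hθ' hθ (by ring)
  have h₂ := hf.2 hx hdy hne hθ hθ' (by ring)
  rw [hdx] at h₁
  rw [hy] at h₂
  rw [sub_lt_sub_iff]
  calc f (d + x) + f y < ((1 - θ) • f x + θ • f (d + y)) + (θ • f x + (1 - θ) • f (d + y)) :=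
        add_lt_add h₁ h₂
    _ = f (d + y) + f x := by module

namespace PAdditive

variable {p : ℝ} {w : Finset ι → ℝ}

omit [DecidableEq ι] [Fintype ι] in
lemma eq_rpow_sum_rpow (hw : PAdditive p w) (hp : p ≠ 0) {S : Finset ι}
    (hS : (Splus w S).Nonempty) : w S = (∑ i ∈ Splus w S, w {i} ^ p) ^ p⁻¹ := by
  rw [← hw.2.2.2 S hS, Real.rpow_rpow_inv (hw.2.1 S) hp]

omit [DecidableEq ι] [Fintype ι] in
lemma eq_rpow_sum_rpow_of_forall_pos (hw : PAdditive p w) (hp : p ≠ 0) {S : Finset ι}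
    (hS : S.Nonempty) (hpos : ∀ i ∈ S, 0 < w {i}) : w S = (∑ i ∈ S, w {i} ^ p) ^ p⁻¹ := by
  have hSplus : Splus w S = S := filter_true_of_mem hpos
  rw [hw.eq_rpow_sum_rpow hp (by rwa [hSplus]), hSplus]

omit [Fintype ι] in
lemma marginal_lt_marginal (hw : PAdditive p w) (hp : p < 0) {i j k : ι}
    (hij : i ≠ j) (hik : i ≠ k) (hjk : j ≠ k) (hi : 0 < w {i}) (hj : 0 < w {j})
    (hk : 0 < w {k}) :
    w (insert k {i}) - w {i} < w (insert k (insert j {i})) - w (insert j {i}) := by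
  have hval (S : Finset ι) := hw.eq_rpow_sum_rpow_of_forall_pos hp.ne (S := S)
  rw [hval {i} (by simp) (by simpa), hval (insert k {i}) (by simp) (by simp [hi, hk]),
    hval (insert j {i}) (by simp) (by simp [hi, hj]),
    hval (insert k (insert j {i})) (by simp) (by simp [hi, hj, hk]),
    sum_pair hik.symm, sum_insert (by simp [hik.symm, hjk.symm] : k ∉ ({j, i} : Finset ι)),
    sum_pair hij.symm, sum_singleton]
  have hpos : ∀ x : ι, 0 < w {x} → 0 < w {x} ^ p := fun x hx ↦ Real.rpow_pos_of_pos hx p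
  exact (Real.strictConvexOn_rpow_of_neg (inv_lt_zero.2 hp)).map_add_sub_lt_map_add_sub
    (hpos i hi) (by simp only [Set.mem_Ioi]; linarith [hpos i hi, hpos j hj, hpos k hk])
    (lt_add_of_pos_left _ (hpos j hj)) (hpos k hk)

end PAdditive

theorem padditive_concave_card_le_two (p : ℝ) (hp : p < 0)
    (w : Finset ι → ℝ) (hw : PAdditive p w)
    (hconcave : ∀ (i : ι) (S T : Finset ι), S ⊆ T → i ∉ T →
      w (insert i T) - w T ≤ w (insert i S) - w S) :
    (Splus w Finset.univ).card ≤ 2 := by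
  by_contra! h
  obtain ⟨i, hi, j, hj, k, hk, hij, hik, hjk⟩ := two_lt_card.1 h
  simp only [Splus, mem_filter, mem_univ, true_and] at hi hj hk
  exact (hconcave k {i} (insert j {i}) (subset_insert _ _) (by simp [hik.symm, hjk.symm])).not_gt
    (hw.marginal_lt_marginal hp hij hik hjk hi hj hk)
end

section
/- Let (N,w) be a nonzero p-additive game with 0 < p ≤ 1 (a benefit game). Then the modified SOC-rule σ^p, defined by σ^p_i(w) = w({i})^p · w(N) / Σ_{j∈N} w({j})^p, is a core-allocation: Σ_{i∈N} σ^p_i(w) = w(N) and Σ_{i∈S} σ^p_i(w) ≥ w(S) for all nonempty S ⊆ N. -/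
open Finset

variable {ι : Type*} [DecidableEq ι] [Fintype ι]

theorem socRule_core_benefit (p : ℝ) (hp0 : 0 < p) (hp1 : p ≤ 1)
    (w : Finset ι → ℝ) (hw : PAdditive p w) (hN : 0 < w Finset.univ) :
    (∑ i : ι, w {i} ^ p * w Finset.univ / ∑ j : ι, w {j} ^ p) = w Finset.univ ∧
    ∀ S : Finset ι, S.Nonempty →
      w S ≤ ∑ i ∈ S, w {i} ^ p * w Finset.univ / ∑ j : ι, w {j} ^ p := by
  obtain ⟨-, hnn, hzero, hadd⟩ := hw
  -- each summand over a set equals sum over Splus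
  have hsum : ∀ S : Finset ι, ∑ i ∈ S, w {i} ^ p = ∑ i ∈ Splus w S, w {i} ^ p := by
    intro S
    rw [Splus, eq_comm, Finset.sum_filter_of_ne]
    intro i _ hne
    rcases lt_or_eq_of_le (hnn {i}) with h | h
    · exact h
    · exact absurd (by rw [← h, Real.zero_rpow hp0.ne']) hne
  have huNE : (Splus w Finset.univ).Nonempty := by
    by_contra h
    rw [Finset.not_nonempty_iff_eq_empty, Splus, Finset.filter_eq_empty_iff] at h
    exact absurd (hzero Finset.univ fun i hi =>
      le_antisymm (not_lt.mp (h hi)) (hnn {i})) hN.ne'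
  have hT : (∑ j : ι, w {j} ^ p) = w Finset.univ ^ p := by
    rw [hsum, hadd Finset.univ huNE]
  have hTpos : 0 < ∑ j : ι, w {j} ^ p := hT ▸ Real.rpow_pos_of_pos hN p
  constructor
  · rw [← Finset.sum_div, ← Finset.sum_mul, mul_comm, mul_div_assoc,
      div_self hTpos.ne', mul_one]
  · intro S _
    rw [← Finset.sum_div, ← Finset.sum_mul]
    by_cases hS : (Splus w S).Nonempty
    · have hA : w S ^ p ≤ ∑ i ∈ S, w {i} ^ p := by
        rw [hadd S hS, ← hsum]
      have hSU : w S ≤ w Finset.univ := by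
        rw [← Real.rpow_le_rpow_iff (hnn S) hN.le hp0]
        calc w S ^ p ≤ ∑ i ∈ S, w {i} ^ p := hA
          _ ≤ ∑ j : ι, w {j} ^ p :=
            Finset.sum_le_sum_of_subset_of_nonneg (Finset.subset_univ S)
              (fun i _ _ => Real.rpow_nonneg (hnn {i}) p)
          _ = w Finset.univ ^ p := hT
      have hkey : w Finset.univ / w Finset.univ ^ p = w Finset.univ ^ (1 + -p) := by
        rw [Real.rpow_add hN 1 (-p), Real.rpow_one, Real.rpow_neg hN.le, div_eq_mul_inv]
      rw [hT, mul_div_assoc, hkey]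
      calc w S = w S ^ p * w S ^ (1 + -p) := by
            rw [← Real.rpow_add' (hnn S) (by ring_nf; norm_num : p + (1 + -p) ≠ 0)]
            norm_num
        _ ≤ w S ^ p * w Finset.univ ^ (1 + -p) :=
            mul_le_mul_of_nonneg_left
              (Real.rpow_le_rpow (hnn S) hSU (by linarith))
              (Real.rpow_nonneg (hnn S) p)
        _ ≤ (∑ i ∈ S, w {i} ^ p) * w Finset.univ ^ (1 + -p) :=
            mul_le_mul_of_nonneg_right hA (Real.rpow_nonneg hN.le _)
    · have : w S = 0 := hzero S fun i hi => by
        by_contra h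
        exact hS ⟨i, Finset.mem_filter.mpr ⟨hi, (hnn {i}).lt_of_ne (Ne.symm h)⟩⟩
      rw [this]
      apply div_nonneg _ hTpos.le
      exact mul_nonneg (Finset.sum_nonneg fun i _ =>
        Real.rpow_nonneg (hnn {i}) p) hN.le
end

section
/- Let (N,w) be a nonzero p-additive game with p ≥ 1 or p < 0 (a cost game). Then the modified SOC-rule σ^p, defined by σ^p_i(w) = w({i})^p · w(N) / Σ_{j∈N} w({j})^p, is a core-allocation for the cost game: Σ_{i∈N} σ^p_i(w) = w(N) and Σ_{i∈S} σ^p_i(w) ≤ w(S) for all nonempty S ⊆ N. -/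
open Finset

variable {ι : Type*} [DecidableEq ι] [Fintype ι]

theorem socRule_core_cost (p : ℝ) (hp : 1 ≤ p ∨ p < 0)
    (w : Finset ι → ℝ) (hw : PAdditive p w) (hN : 0 < w Finset.univ) :
    (∑ i : ι, w {i} ^ p * w Finset.univ / ∑ j : ι, w {j} ^ p) = w Finset.univ ∧
    ∀ S : Finset ι, S.Nonempty →
      (∑ i ∈ S, w {i} ^ p * w Finset.univ / ∑ j : ι, w {j} ^ p) ≤ w S := by
  obtain ⟨h0, hnn, hzero, hpadd⟩ := hw
  have hp0 : p ≠ 0 := by rcases hp with h | h <;> intro h' <;> rw [h'] at h <;> linarith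
  have hSNu : (Splus w (Finset.univ : Finset ι)).Nonempty := by
    by_contra h
    rw [Finset.not_nonempty_iff_eq_empty] at h
    have h1 : w (Finset.univ : Finset ι) = 0 := by
      apply hzero
      intro i hi
      by_contra hne
      have hpos : 0 < w {i} := lt_of_le_of_ne (hnn {i}) (Ne.symm hne)
      have : i ∈ Splus w (Finset.univ : Finset ι) :=
        Finset.mem_filter.mpr ⟨hi, hpos⟩
      simp [h] at this
    linarith
  have hsum : ∀ S : Finset ι, ∑ i ∈ S, w {i} ^ p = ∑ i ∈ Splus w S, w {i} ^ p := by
    intro S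
    refine (Finset.sum_subset (Finset.filter_subset _ _) ?_).symm
    intro i hi hni
    have h0i : w {i} = 0 := by
      by_contra hne
      exact hni (Finset.mem_filter.mpr ⟨hi, lt_of_le_of_ne (hnn {i}) (Ne.symm hne)⟩)
    rw [h0i, Real.zero_rpow hp0]
  have hNp : (0:ℝ) < w Finset.univ ^ p := Real.rpow_pos_of_pos hN p
  have hDN : ∑ j : ι, w {j} ^ p = w Finset.univ ^ p := by
    rw [hsum, ← hpadd Finset.univ hSNu]
  refine ⟨?_, ?_⟩
  · rw [← Finset.sum_div, ← Finset.sum_mul, hDN]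
    field_simp
  · intro S _
    rw [← Finset.sum_div, ← Finset.sum_mul, hsum]
    rcases (Splus w S).eq_empty_or_nonempty with he | hne
    · rw [he]
      simpa using hnn S
    · rw [← hpadd S hne, hDN, div_le_iff₀ hNp]
      -- w S > 0
      have hSpos : 0 < w S := by
        rcases lt_or_eq_of_le (hnn S) with h | h
        · exact h
        · exfalso
          have h1 : w S ^ p = ∑ i ∈ Splus w S, w {i} ^ p := hpadd S hne
          have h2 : (0:ℝ) < ∑ i ∈ Splus w S, w {i} ^ p := by
            apply Finset.sum_pos _ hne
            intro i hi
            exact Real.rpow_pos_of_pos (Finset.mem_filter.mp hi).2 p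
          rw [← h, Real.zero_rpow hp0] at h1
          linarith
      -- w S ^ p ≤ w N ^ p
      have hsub : Splus w S ⊆ Splus w (Finset.univ : Finset ι) := by
        intro i hi
        exact Finset.mem_filter.mpr ⟨Finset.mem_univ i, (Finset.mem_filter.mp hi).2⟩
      have hle : w S ^ p ≤ w Finset.univ ^ p := by
        rw [hpadd S hne, hpadd Finset.univ hSNu]
        apply Finset.sum_le_sum_of_subset_of_nonneg hsub
        intro i _ _
        exact Real.rpow_nonneg (hnn {i}) p
      rcases hp with hp1 | hpn
      · -- p ≥ 1 : w S ≤ w N, then w S ^ p = w S ^ (p-1) * w S ≤ w N ^ (p-1) * w S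
        have hSN : w S ≤ w Finset.univ :=
          (Real.rpow_le_rpow_iff (hnn S) (le_of_lt hN) (by linarith)).mp hle
        have h1 : w S ^ (p - 1) ≤ w Finset.univ ^ (p - 1) :=
          Real.rpow_le_rpow (hnn S) hSN (by linarith)
        have h2 : w S ^ p = w S ^ (p - 1) * w S := by
          rw [show p = (p - 1) + 1 by ring, Real.rpow_add_one hSpos.ne']; norm_num
        have h3 : w Finset.univ ^ p = w Finset.univ ^ (p - 1) * w Finset.univ := by
          rw [show p = (p - 1) + 1 by ring, Real.rpow_add_one hN.ne']; norm_num
        calc w S ^ p * w Finset.univ = w S ^ (p - 1) * w S * w Finset.univ := by rw [h2]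
          _ ≤ w Finset.univ ^ (p - 1) * w S * w Finset.univ := by
              apply mul_le_mul_of_nonneg_right (mul_le_mul_of_nonneg_right h1 (hnn S))
                (le_of_lt hN)
          _ = w S * (w Finset.univ ^ (p - 1) * w Finset.univ) := by ring
          _ = w S * w Finset.univ ^ p := by rw [← h3]
      · -- p < 0 : w N ≤ w S
        have hSN : w Finset.univ ≤ w S :=
          (Real.rpow_le_rpow_iff_of_neg hSpos hN hpn).mp hle
        calc w S ^ p * w Finset.univ ≤ w Finset.univ ^ p * w S :=
              mul_le_mul hle hSN (le_of_lt hN) (le_of_lt hNp)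
          _ = w S * w Finset.univ ^ p := by ring
end

section
/- Let (N,w) be a nonzero p-additive game with p ≥ 1 or p < 0. Define y_i^S := w({i})^p (Σ_{j∈S} w({j})^p)^{1/p − 1} for every nonempty S ⊆ N (with the convention y_i^S = 0 when Σ_{j∈S} w({j})^p = 0). Then (y^S) is a population monotonic allocation scheme: Σ_{i∈S} y_i^S = w(S) for all nonempty S, and y_i^S ≥ y_i^T whenever i ∈ S ⊆ T ⊆ N. -/
open Finset

variable {ι : Type*} [DecidableEq ι] [Fintype ι]

/-- The candidate pmas allocation: `y_i^S = w({i})^p (∑_{j∈S} w({j})^p)^{1/p - 1}`,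
with the convention that it is `0` when the sum vanishes. -/
noncomputable def pmasY (p : ℝ) (w : Finset ι → ℝ) (S : Finset ι) (i : ι) : ℝ :=
  if (∑ j ∈ S, w {j} ^ p) = 0 then 0
  else w {i} ^ p * (∑ j ∈ S, w {j} ^ p) ^ (1 / p - 1)

theorem socRule_pmas (p : ℝ) (hp : 1 ≤ p ∨ p < 0)
    (w : Finset ι → ℝ) (hw : PAdditive p w) (hnz : ∃ S : Finset ι, w S ≠ 0) :
    (∀ S : Finset ι, S.Nonempty → (∑ i ∈ S, pmasY p w S i) = w S) ∧
    ∀ S T : Finset ι, S ⊆ T → ∀ i ∈ S, pmasY p w T i ≤ pmasY p w S i := by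
  obtain ⟨h0, hnn, hz, hpadd⟩ := hw
  have hp0 : p ≠ 0 := by rcases hp with h | h <;> intro h' <;> linarith
  have hterm_nn : ∀ i : ι, (0:ℝ) ≤ w {i} ^ p := fun i => Real.rpow_nonneg (hnn _) p
  have hterm0 : ∀ i : ι, w {i} = 0 → w {i} ^ p = 0 := fun i h => by
    rw [h, Real.zero_rpow hp0]
  have hsum_eq : ∀ S : Finset ι, ∑ j ∈ S, w {j} ^ p = ∑ j ∈ Splus w S, w {j} ^ p := by
    intro S
    rw [Splus, eq_comm]
    apply Finset.sum_filter_of_ne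
    intro x _ hne
    rcases (hnn {x}).lt_or_eq with h | h
    · exact h
    · exact absurd (hterm0 x h.symm) hne
  have hexp_nonpos : 1 / p - 1 ≤ 0 := by
    rcases hp with h | h
    · have : 1 / p ≤ 1 := by
        rw [div_le_one (by linarith)]; exact h
      linarith
    · have : 1 / p < 0 := by
        apply div_neg_of_pos_of_neg one_pos h
      linarith
  constructor
  · intro S hS
    by_cases hplus : (Splus w S).Nonempty
    · obtain ⟨i0, hi0⟩ := hplus
      have hi0' := hi0
      rw [Splus, Finset.mem_filter] at hi0'
      have hpos : 0 < ∑ j ∈ S, w {j} ^ p :=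
        Finset.sum_pos' (fun j _ => hterm_nn j)
          ⟨i0, hi0'.1, Real.rpow_pos_of_pos hi0'.2 p⟩
      have hwp : w S ^ p = ∑ j ∈ S, w {j} ^ p := by
        rw [hsum_eq]; exact hpadd S ⟨i0, hi0⟩
      have hwS : w S = (∑ j ∈ S, w {j} ^ p) ^ (1 / p) := by
        rw [← hwp, ← Real.rpow_mul (hnn S), mul_one_div, div_self hp0, Real.rpow_one]
      simp only [pmasY, if_neg hpos.ne']
      rw [← Finset.sum_mul, hwS]
      nth_rewrite 1 [← Real.rpow_one (∑ j ∈ S, w {j} ^ p)]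
      rw [← Real.rpow_add hpos]
      norm_num
    · have hall : ∀ i ∈ S, w {i} = 0 := by
        intro i hi
        by_contra hne
        have : 0 < w {i} := lt_of_le_of_ne (hnn _) (Ne.symm hne)
        exact hplus ⟨i, Finset.mem_filter.mpr ⟨hi, this⟩⟩
      have hsum0 : ∑ j ∈ S, w {j} ^ p = 0 :=
        Finset.sum_eq_zero fun j hj => hterm0 j (hall j hj)
      simp only [pmasY, if_pos hsum0, Finset.sum_const_zero]
      exact (hz S hall).symm
  · intro S T hST i hiS
    by_cases hi : 0 < w {i}
    · have hposS : 0 < ∑ j ∈ S, w {j} ^ p :=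
        Finset.sum_pos' (fun j _ => hterm_nn j) ⟨i, hiS, Real.rpow_pos_of_pos hi p⟩
      have hle : ∑ j ∈ S, w {j} ^ p ≤ ∑ j ∈ T, w {j} ^ p :=
        Finset.sum_le_sum_of_subset_of_nonneg hST fun j _ _ => hterm_nn j
      have hposT : 0 < ∑ j ∈ T, w {j} ^ p := lt_of_lt_of_le hposS hle
      simp only [pmasY, if_neg hposS.ne', if_neg hposT.ne']
      exact mul_le_mul_of_nonneg_left
        (Real.rpow_le_rpow_of_nonpos hposS hle hexp_nonpos) (hterm_nn i)
    · have hwi : w {i} = 0 := le_antisymm (not_lt.mp hi) (hnn _)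
      simp [pmasY, hwi, Real.zero_rpow hp0]
end
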